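/- arXiv:1412.7169 — 5 statements merged into one kernel-verified Lean document; each statement's English description precedes it below -/
import Mathlib

section
/- Let X be a Hausdorff locally compact non-discrete topological space containing a non-trivial convergent sequence, i.e., a sequence (x_n) converging to a point x_0 with x_n ≠ x_0 for all n. Then X is not an F-space. -/
/-!
In an F-space, `f = k · |f|` forces `k = 1` on `{f > 0}` and `k = -1` on `{f < 0}`, so these two
sets have disjoint closures. A non-trivial convergent sequence contains an injective one, `y`, each
of whose points lies outside the closure of the others; Urysohn bumps at the points `y n`, weighted
by `(-1/2)^n`, sum to a bounded continuous `f` with `f (y n) = (-1/2)^n`, and then the limit lies in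
the closure of both `{f > 0}` and `{f < 0}`.
-/

open scoped BoundedContinuousFunction
open Filter Topology

/-- `X` is an F-space: every bounded continuous real-valued function `f` on `X` factors as
`f = k · |f|` for some bounded continuous function `k` on `X`. -/
def IsFSpace (X : Type*) [TopologicalSpace X] : Prop :=
  ∀ f : X →ᵇ ℝ, ∃ k : X →ᵇ ℝ, ∀ x : X, f x = k x * |f x|

open Set Function

section

variable {X : Type*} [TopologicalSpace X]

theorem IsFSpace.disjoint_closure_pos_neg (hX : IsFSpace X) (f : X →ᵇ ℝ) :
    Disjoint (closure {x | 0 < f x}) (closure {x | f x < 0}) := by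
  obtain ⟨k, hk⟩ := hX f
  have hcl : ∀ (s : Set X) (c : ℝ), (∀ x ∈ s, k x = c) → closure s ⊆ k ⁻¹' {c} :=
    fun _ _ h => closure_minimal h (isClosed_singleton.preimage k.continuous)
  refine .mono (hcl _ 1 fun x hx => ?_) (hcl _ (-1) fun x hx => ?_)
    ((disjoint_singleton.2 (by norm_num)).preimage k)
  · have := hk x
    rw [abs_of_pos hx] at this
    exact mul_right_cancel₀ hx.ne' (this.symm.trans (one_mul _).symm)
  · have := hk x
    rw [abs_of_neg hx] at this
    exact mul_right_cancel₀ hx.ne (by linarith)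

theorem Filter.Tendsto.tendsto_cofinite_of_injective_of_range_subset {ι κ : Type*}
    {x : ι → X} {a : X} (hx : Tendsto x cofinite (𝓝 a)) {y : κ → X} (hy : Injective y)
    (hyx : range y ⊆ range x) : Tendsto y cofinite (𝓝 a) := by
  intro U hU
  have hfin : (x '' {i | x i ∉ U}).Finite := (hx hU).image x
  refine (hfin.preimage hy.injOn).subset fun j (hj : y j ∉ U) => ?_
  obtain ⟨i, hi⟩ := hyx (mem_range_self j)
  exact ⟨i, by simpa [hi] using hj, hi⟩

theorem infinite_range_of_tendsto_of_forall_ne [T1Space X] {ι : Type*} [Infinite ι]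
    {x : ι → X} {a : X} (hx : Tendsto x cofinite (𝓝 a)) (hne : ∀ i, x i ≠ a) :
    (range x).Infinite := by
  intro hfin
  have : ∀ᶠ i in cofinite, x i ∉ range x :=
    hx (hfin.isClosed.isOpen_compl.mem_nhds fun ⟨i, hi⟩ => hne i hi)
  exact this.exists.elim fun i hi => hi (mem_range_self i)

theorem exists_injective_tendsto_of_forall_ne [T1Space X] {x : ℕ → X} {a : X}
    (hx : Tendsto x atTop (𝓝 a)) (hne : ∀ n, x n ≠ a) :
    ∃ y : ℕ → X, Injective y ∧ Tendsto y cofinite (𝓝 a) ∧ ∀ n, y n ≠ a := by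
  rw [← Nat.cofinite_eq_atTop] at hx
  set e := (infinite_range_of_tendsto_of_forall_ne hx hne).natEmbedding
  have he : Injective (fun n => (e n : X)) := Subtype.val_injective.comp e.injective
  refine ⟨fun n => e n, he, hx.tendsto_cofinite_of_injective_of_range_subset he
    (range_subset_iff.2 fun n => (e n).2), fun n hn => ?_⟩
  obtain ⟨m, hm⟩ := (e n).2
  exact hne m (hm.trans hn)

theorem notMem_closure_image_compl_of_tendsto [T2Space X] {ι : Type*} {y : ι → X} {a : X}
    (hy : Injective y) (hlim : Tendsto y cofinite (𝓝 a)) (hne : ∀ i, y i ≠ a) (i : ι) :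
    y i ∉ closure (y '' {i}ᶜ) := by
  have hcpt : IsCompact (insert a (y '' {i}ᶜ)) := by
    have := (hlim.comp (Subtype.val_injective (p := (· ∈ ({i}ᶜ : Set ι)))).tendsto_cofinite)
      |>.isCompact_insert_range_of_cofinite
    rwa [range_comp, Subtype.range_coe] at this
  intro hi
  rcases closure_minimal (subset_insert _ _) hcpt.isClosed hi with h | ⟨j, hj, hji⟩
  · exact hne i h
  · exact hj (hy hji)

theorem exists_bounded_one_zero_of_notMem_isClosed [RegularSpace X] [LocallyCompactSpace X]
    {p : X} {S : Set X} (hS : IsClosed S) (hp : p ∉ S) :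
    ∃ g : X →ᵇ ℝ, g p = 1 ∧ EqOn g 0 S ∧ ‖g‖ ≤ 1 := by
  obtain ⟨g, hg1, hg0, -, hg⟩ :=
    exists_continuous_one_zero_of_isCompact isCompact_singleton hS (disjoint_singleton_left.2 hp)
  have hbound : ∀ x, ‖g x‖ ≤ 1 := fun x => by
    rw [Real.norm_eq_abs, abs_le]; exact ⟨by linarith [(hg x).1], (hg x).2⟩
  exact ⟨.ofNormedAddCommGroup g g.continuous 1 hbound, hg1 rfl, hg0,
    BoundedContinuousFunction.norm_ofNormedAddCommGroup_le _ zero_le_one hbound⟩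

theorem exists_bounded_apply_eq_of_summable [RegularSpace X] [LocallyCompactSpace X]
    {ι : Type*} {y : ι → X} (hy : ∀ i, y i ∉ closure (y '' {i}ᶜ))
    {c : ι → ℝ} (hc : Summable fun i => ‖c i‖) :
    ∃ f : X →ᵇ ℝ, ∀ i, f (y i) = c i := by
  choose g hg1 hg0 hgnorm using fun i =>
    exists_bounded_one_zero_of_notMem_isClosed isClosed_closure (hy i)
  have hsum : Summable fun i => c i • g i :=
    hc.of_norm_bounded fun i => (norm_smul_le _ _).trans
      (mul_le_of_le_one_right (norm_nonneg _) (hgnorm i))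
  refine ⟨∑' i, c i • g i, fun i => ?_⟩
  rw [← BoundedContinuousFunction.evalCLM_apply ℝ,
    (BoundedContinuousFunction.evalCLM ℝ (y i)).map_tsum hsum, tsum_eq_single i]
  · simp [hg1]
  · intro j hj
    simp [hg0 j (subset_closure ⟨i, Ne.symm hj, rfl⟩)]

end

theorem not_isFSpace_of_nontrivial_convergent_sequence_general
    {X : Type*} [TopologicalSpace X] [T2Space X] [LocallyCompactSpace X]
    (x : ℕ → X) (x₀ : X) (hlim : Tendsto x atTop (𝓝 x₀)) (hne : ∀ n, x n ≠ x₀) :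
    ¬ IsFSpace X := by
  intro hX
  obtain ⟨y, hy, hylim, hyne⟩ := exists_injective_tendsto_of_forall_ne hlim hne
  obtain ⟨f, hf⟩ := exists_bounded_apply_eq_of_summable
    (notMem_closure_image_compl_of_tendsto hy hylim hyne)
    (c := fun n => (-(1 / 2 : ℝ)) ^ n) (by simpa using summable_geometric_two)
  rw [Nat.cofinite_eq_atTop] at hylim
  have hpos : x₀ ∈ closure {x | 0 < f x} :=
    mem_closure_of_tendsto (hylim.comp (strictMono_mul_left_of_pos two_pos).tendsto_atTop)
      (.of_forall fun n => by simp [hf, pow_mul])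
  have hneg : x₀ ∈ closure {x | f x < 0} :=
    mem_closure_of_tendsto
      (hylim.comp ((strictMono_mul_left_of_pos two_pos).add_const 1).tendsto_atTop)
      (.of_forall fun n => by simp [hf, pow_succ, pow_mul])
  exact (hX.disjoint_closure_pos_neg f).notMem_of_mem_left hpos hneg

/-- A Hausdorff locally compact non-discrete space containing a non-trivial
convergent sequence is not an F-space. -/
theorem not_isFSpace_of_nontrivial_convergent_sequence
    {X : Type*} [TopologicalSpace X] [T2Space X] [LocallyCompactSpace X]
    (hnd : ¬ DiscreteTopology X)
    (x : ℕ → X) (x₀ : X) (hlim : Tendsto x atTop (𝓝 x₀)) (hne : ∀ n, x n ≠ x₀) :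
    ¬ IsFSpace X :=
  not_isFSpace_of_nontrivial_convergent_sequence_general x x₀ hlim hne
end

section
/- Let X be a compact Hausdorff space. Then X is an F-space if and only if for all σ-compact subsets A and B of X, the conditions cl(A) ∩ B = ∅ and A ∩ cl(B) = ∅ together imply cl(A) ∩ cl(B) = ∅. -/
open scoped BoundedContinuousFunction
open Filter Topology

/-!
If `f = k · |f|`, then `k = 1` on `{f > 0}` and `k = -1` on `{f < 0}`, hence on their closures,
which are therefore disjoint. Conversely, if these closures are disjoint, an Urysohn function equal
to `1` on one and `-1` on the other is such a `k`. The sets `{f > 0}`, `{f < 0}` are σ-compact and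
each misses the closure of the other, and every such pair `A`, `B` is of this form: summing
`2⁻ⁿ`-weighted Urysohn functions over the compact pieces gives a continuous `f` that is positive
on `A` and negative on `B`.
-/

open Set

section SigmaCompact

variable {X : Type*} [TopologicalSpace X]

lemma isSigmaCompact_preimage_of_isOpen [CompactSpace X] {Y : Type*} [PseudoEMetricSpace Y]
    {f : X → Y} (hf : Continuous f) {U : Set Y} (hU : IsOpen U) : IsSigmaCompact (f ⁻¹' U) := by
  obtain ⟨F, hF_closed, -, hF_union, -⟩ := hU.exists_iUnion_isClosed
  refine ⟨fun n ↦ f ⁻¹' F n, fun n ↦ ((hF_closed n).preimage hf).isCompact, ?_⟩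
  rw [← preimage_iUnion, hF_union]

variable [NormalSpace X] [T2Space X]

lemma IsSigmaCompact.exists_continuous_pos_of_disjoint {A C : Set X} (hA : IsSigmaCompact A)
    (hC : IsClosed C) (hAC : Disjoint A C) :
    ∃ g : C(X, ℝ), EqOn g 0 C ∧ ∀ x ∈ A, 0 < g x := by
  obtain ⟨K, hK_compact, rfl⟩ := hA
  have hu (n : ℕ) : ∃ u : X →ᵇ ℝ, EqOn u 0 C ∧ EqOn u 1 (K n) ∧ ∀ x, u x ∈ Icc (0 : ℝ) 1 :=
    exists_bounded_zero_one_of_closed hC (hK_compact n).isClosed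
      (hAC.mono_left (subset_iUnion K n)).symm
  choose u hu_zero hu_one hu_mem using hu
  have hterm_le (n : ℕ) (x : X) : ‖(1 / 2 : ℝ) ^ n * u n x‖ ≤ (1 / 2 : ℝ) ^ n := by
    rw [Real.norm_of_nonneg (mul_nonneg (by positivity) (hu_mem n x).1)]
    exact mul_le_of_le_one_right (by positivity) (hu_mem n x).2
  refine ⟨⟨fun x ↦ ∑' n, (1 / 2 : ℝ) ^ n * u n x,
    continuous_tsum (fun n ↦ by fun_prop) summable_geometric_two hterm_le⟩, ?_, ?_⟩
  · intro x hx
    simp [hu_zero _ hx]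
  · rintro x ⟨-, ⟨n, rfl⟩, hxn⟩
    refine Summable.tsum_pos
      (summable_geometric_two.of_norm_bounded (hterm_le · x)) (fun m ↦ ?_) n ?_
    · exact mul_nonneg (by positivity) (hu_mem m x).1
    · simp [hu_one n hxn]

lemma exists_continuous_pos_neg_of_separated {A B : Set X} (hA : IsSigmaCompact A)
    (hB : IsSigmaCompact B) (hAB : Disjoint (closure A) B) (hBA : Disjoint A (closure B)) :
    ∃ f : C(X, ℝ), (∀ x ∈ A, 0 < f x) ∧ ∀ x ∈ B, f x < 0 := by
  obtain ⟨g, hg_zero, hg_pos⟩ := hA.exists_continuous_pos_of_disjoint isClosed_closure hBA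
  obtain ⟨h, hh_zero, hh_pos⟩ := hB.exists_continuous_pos_of_disjoint isClosed_closure hAB.symm
  refine ⟨g - h, fun x hx ↦ ?_, fun x hx ↦ ?_⟩
  · simpa [hh_zero (subset_closure hx)] using hg_pos x hx
  · simpa [hg_zero (subset_closure hx)] using hh_pos x hx

end SigmaCompact

section FSpace

variable {X : Type*} [TopologicalSpace X]

lemma eq_one_of_eq_mul_abs {r c : ℝ} (h : r = c * |r|) (hr : 0 < r) : c = 1 := by
  rw [abs_of_pos hr] at h
  exact mul_right_cancel₀ hr.ne' (by linarith)

lemma eq_neg_one_of_eq_mul_abs {r c : ℝ} (h : r = c * |r|) (hr : r < 0) : c = -1 := by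
  rw [abs_of_neg hr] at h
  exact mul_right_cancel₀ hr.ne (by linarith)

lemma IsFSpace.disjoint_closure_of_pos_neg (hX : IsFSpace X) (f : X →ᵇ ℝ) {A B : Set X}
    (hA : ∀ x ∈ A, 0 < f x) (hB : ∀ x ∈ B, f x < 0) : Disjoint (closure A) (closure B) := by
  obtain ⟨k, hk⟩ := hX f
  have hkA : closure A ⊆ k ⁻¹' {1} := closure_minimal
    (fun x hx ↦ eq_one_of_eq_mul_abs (hk x) (hA x hx)) (isClosed_singleton.preimage k.continuous)
  have hkB : closure B ⊆ k ⁻¹' {-1} := closure_minimal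
    (fun x hx ↦ eq_neg_one_of_eq_mul_abs (hk x) (hB x hx))
    (isClosed_singleton.preimage k.continuous)
  exact (disjoint_singleton.mpr (by norm_num)).preimage k |>.mono hkA hkB

lemma exists_mul_abs_eq_of_disjoint_closure [NormalSpace X] (f : X →ᵇ ℝ)
    (hf : Disjoint (closure {x | 0 < f x}) (closure {x | f x < 0})) :
    ∃ k : X →ᵇ ℝ, ∀ x, f x = k x * |f x| := by
  obtain ⟨k, hk_neg, hk_pos, -⟩ := exists_bounded_mem_Icc_of_closed_of_le isClosed_closure
    isClosed_closure hf.symm (show (-1 : ℝ) ≤ 1 by norm_num)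
  refine ⟨k, fun x ↦ ?_⟩
  rcases lt_trichotomy (f x) 0 with hx | hx | hx
  · simp [hk_neg (subset_closure hx), abs_of_neg hx]
  · simp [hx]
  · simp [hk_pos (subset_closure hx), abs_of_pos hx]

end FSpace

/-- A compact Hausdorff space is an F-space iff for all σ-compact subsets
`A`, `B`, if `cl A ∩ B = ∅` and `A ∩ cl B = ∅` then `cl A ∩ cl B = ∅`. -/
theorem isFSpace_iff_sigmaCompact_separation
    {X : Type*} [TopologicalSpace X] [CompactSpace X] [T2Space X] :
    IsFSpace X ↔
      ∀ A B : Set X, IsSigmaCompact A → IsSigmaCompact B →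
        closure A ∩ B = ∅ → A ∩ closure B = ∅ → closure A ∩ closure B = ∅ := by
  simp only [← disjoint_iff_inter_eq_empty]
  constructor
  · intro hX A B hA hB hAB hBA
    obtain ⟨f, hf_pos, hf_neg⟩ := exists_continuous_pos_neg_of_separated hA hB hAB hBA
    exact hX.disjoint_closure_of_pos_neg (.mkOfCompact f) hf_pos hf_neg
  · intro hsep f
    have hf := f.continuous
    refine exists_mul_abs_eq_of_disjoint_closure f (hsep _ _
      (isSigmaCompact_preimage_of_isOpen hf isOpen_Ioi)
      (isSigmaCompact_preimage_of_isOpen hf isOpen_Iio) ?_ ?_)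
    · exact disjoint_left.mpr fun x hx (hx' : f x < 0) ↦
        (closure_lt_subset_le (f := fun _ ↦ 0) continuous_const hf hx).not_gt hx'
    · exact disjoint_right.mpr fun x hx (hx' : 0 < f x) ↦
        (closure_lt_subset_le (g := fun _ ↦ 0) hf continuous_const hx).not_gt hx'
end

section
/- Let X be a locally compact Hausdorff space and let μ and ν be regular (complex/signed) Borel measures in M(X). Then μ and ν are mutually singular if and only if ‖μ + ν‖ = ‖μ − ν‖ = ‖μ‖ + ‖ν‖, where ‖·‖ denotes the total variation norm. -/
/-!
The total variation is `‖σ‖ = max_B (σ B - σ Bᶜ)`, and the maximum is attained exactly at the Hahn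
sets of `σ`, i.e. the sets carrying `σ⁺` whose complement carries `σ⁻`. Hence
`‖μ + ν‖ = ‖μ‖ + ‖ν‖` iff `μ` and `ν` have a common Hahn set, and `‖μ - ν‖ = ‖μ‖ + ‖ν‖` iff some
Hahn set of `μ` has a Hahn set of `ν` as complement. If `E` separates `μ` and `ν`, such sets are
obtained by gluing a Hahn set of `μ` off `E` to one of `ν` on `E`. Conversely, Hahn sets are unique
up to null sets: if `B` is a common Hahn set and `C` a Hahn set of `μ` with `Cᶜ` one of `ν`, then
`B ∆ C` is `|μ|`-null and its complement `B ∆ Cᶜ` is `|ν|`-null.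
-/

open MeasureTheory

/-- The total variation norm of a signed Borel measure. -/
noncomputable def tvNorm {X : Type*} [MeasurableSpace X] (μ : SignedMeasure X) : ℝ :=
  (μ.totalVariation Set.univ).toReal

open scoped symmDiff

namespace MeasureTheory.SignedMeasure

variable {X : Type*} [MeasurableSpace X]

/-- Weaker than `0 ≤[B] σ ∧ σ ≤[Bᶜ] 0`: the sign conditions only hold up to `|σ|`-null sets. -/
def IsHahnSet (σ : SignedMeasure X) (B : Set X) : Prop :=
  σ.toJordanDecomposition.posPart Bᶜ = 0 ∧ σ.toJordanDecomposition.negPart B = 0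

theorem exists_isHahnSet (σ : SignedMeasure X) : ∃ B, MeasurableSet B ∧ IsHahnSet σ B := by
  obtain ⟨S, hS, -, -, hpos, hneg⟩ := σ.toJordanDecomposition.exists_compl_positive_negative
  exact ⟨Sᶜ, hS.compl, by rwa [compl_compl], hneg⟩

theorem isHahnSet_neg_iff {σ : SignedMeasure X} {B : Set X} :
    IsHahnSet (-σ) B ↔ IsHahnSet σ Bᶜ := by
  rw [IsHahnSet, IsHahnSet, toJordanDecomposition_neg, JordanDecomposition.neg_posPart,
    JordanDecomposition.neg_negPart, compl_compl, and_comm]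

theorem IsHahnSet.isHahnSet_iff {σ : SignedMeasure X} {A B : Set X} (hA : IsHahnSet σ A) :
    IsHahnSet σ B ↔ σ.totalVariation (A ∆ B) = 0 := by
  rw [totalVariation, Measure.add_apply, add_eq_zero]
  constructor
  · rintro ⟨hposB, hnegB⟩
    refine ⟨measure_mono_null ?_ (measure_union_null hA.1 hposB),
      measure_mono_null Set.symmDiff_subset_union (measure_union_null hA.2 hnegB)⟩
    rw [← compl_symmDiff_compl]
    exact Set.symmDiff_subset_union
  · rintro ⟨hpos, hneg⟩
    refine ⟨measure_mono_null ?_ (measure_union_null hpos hA.1),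
      measure_mono_null (le_symmDiff_sup_left A B) (measure_union_null hneg hA.2)⟩
    rw [← compl_symmDiff_compl]
    exact le_symmDiff_sup_left _ _

theorem tvNorm_eq_posPart_add_negPart (σ : SignedMeasure X) :
    tvNorm σ = σ.toJordanDecomposition.posPart.real Set.univ
      + σ.toJordanDecomposition.negPart.real Set.univ :=
  measureReal_add_apply

theorem tvNorm_sub_apply_sub_apply_compl (σ : SignedMeasure X) {B : Set X} (hB : MeasurableSet B) :
    tvNorm σ - (σ B - σ Bᶜ) =
      2 * (σ.toJordanDecomposition.posPart.real Bᶜ + σ.toJordanDecomposition.negPart.real B) := by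
  rw [tvNorm_eq_posPart_add_negPart, apply_eq_posPart_real_sub_negPart_real σ hB,
    apply_eq_posPart_real_sub_negPart_real σ hB.compl,
    ← measureReal_add_measureReal_compl hB (μ := σ.toJordanDecomposition.posPart),
    ← measureReal_add_measureReal_compl hB (μ := σ.toJordanDecomposition.negPart)]
  ring

theorem apply_sub_apply_compl_le_tvNorm (σ : SignedMeasure X) {B : Set X} (hB : MeasurableSet B) :
    σ B - σ Bᶜ ≤ tvNorm σ :=
  sub_nonneg.1 (by rw [tvNorm_sub_apply_sub_apply_compl σ hB]; positivity)

theorem apply_sub_apply_compl_eq_tvNorm_iff (σ : SignedMeasure X) {B : Set X}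
    (hB : MeasurableSet B) :
    σ B - σ Bᶜ = tvNorm σ ↔ IsHahnSet σ B := by
  rw [IsHahnSet, ← measureReal_eq_zero_iff, ← measureReal_eq_zero_iff, eq_comm, ← sub_eq_zero,
    tvNorm_sub_apply_sub_apply_compl σ hB, mul_eq_zero,
    add_eq_zero_iff_of_nonneg measureReal_nonneg measureReal_nonneg]
  norm_num

theorem tvNorm_add_le (μ ν : SignedMeasure X) : tvNorm (μ + ν) ≤ tvNorm μ + tvNorm ν := by
  obtain ⟨B, hB, hBH⟩ := exists_isHahnSet (μ + ν)
  rw [← ((μ + ν).apply_sub_apply_compl_eq_tvNorm_iff hB).2 hBH, add_apply, add_apply]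
  linarith [μ.apply_sub_apply_compl_le_tvNorm hB, ν.apply_sub_apply_compl_le_tvNorm hB]

theorem tvNorm_add_eq_iff (μ ν : SignedMeasure X) :
    tvNorm (μ + ν) = tvNorm μ + tvNorm ν ↔
      ∃ B, MeasurableSet B ∧ IsHahnSet μ B ∧ IsHahnSet ν B := by
  constructor
  · intro h
    obtain ⟨B, hB, hBH⟩ := exists_isHahnSet (μ + ν)
    rw [← ((μ + ν).apply_sub_apply_compl_eq_tvNorm_iff hB).2 hBH, add_apply, add_apply] at h
    have hμ := μ.apply_sub_apply_compl_le_tvNorm hB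
    have hν := ν.apply_sub_apply_compl_le_tvNorm hB
    exact ⟨B, hB, (μ.apply_sub_apply_compl_eq_tvNorm_iff hB).1 (by linarith),
      (ν.apply_sub_apply_compl_eq_tvNorm_iff hB).1 (by linarith)⟩
  · rintro ⟨B, hB, hμB, hνB⟩
    refine (tvNorm_add_le μ ν).antisymm ?_
    calc tvNorm μ + tvNorm ν = (μ + ν) B - (μ + ν) Bᶜ := by
          rw [add_apply, add_apply,
            ← (μ.apply_sub_apply_compl_eq_tvNorm_iff hB).2 hμB,
            ← (ν.apply_sub_apply_compl_eq_tvNorm_iff hB).2 hνB]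
          ring
      _ ≤ tvNorm (μ + ν) := (μ + ν).apply_sub_apply_compl_le_tvNorm hB

theorem tvNorm_neg (σ : SignedMeasure X) : tvNorm (-σ) = tvNorm σ := by
  rw [tvNorm, tvNorm, totalVariation_neg]

theorem tvNorm_sub_eq_iff (μ ν : SignedMeasure X) :
    tvNorm (μ - ν) = tvNorm μ + tvNorm ν ↔
      ∃ B, MeasurableSet B ∧ IsHahnSet μ B ∧ IsHahnSet ν Bᶜ := by
  simp_rw [sub_eq_add_neg, ← tvNorm_neg ν, tvNorm_add_eq_iff, isHahnSet_neg_iff]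

theorem exists_common_isHahnSet_of_totalVariation_eq_zero {μ ν : SignedMeasure X} {E : Set X}
    (hE : MeasurableSet E) (hμE : μ.totalVariation E = 0) (hνE : ν.totalVariation Eᶜ = 0) :
    ∃ B, MeasurableSet B ∧ IsHahnSet μ B ∧ IsHahnSet ν B := by
  obtain ⟨A, hA, hμA⟩ := exists_isHahnSet μ
  obtain ⟨C, hC, hνC⟩ := exists_isHahnSet ν
  refine ⟨E.ite C A, hE.ite hC hA, hμA.isHahnSet_iff.2 (measure_mono_null ?_ hμE),
    hνC.isHahnSet_iff.2 (measure_mono_null ?_ hνE)⟩ <;>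
  · intro x
    by_cases hx : x ∈ E <;> simp [Set.ite, Set.mem_symmDiff, hx]

end MeasureTheory.SignedMeasure

open SignedMeasure

theorem mutuallySingular_iff_norm_add_eq_and_norm_sub_eq_general
    {X : Type*} [MeasurableSpace X]
    (μ ν : SignedMeasure X) :
    (∃ E : Set X, MeasurableSet E ∧ μ.totalVariation E = 0 ∧ ν.totalVariation Eᶜ = 0) ↔
      tvNorm (μ + ν) = tvNorm μ + tvNorm ν ∧ tvNorm (μ - ν) = tvNorm μ + tvNorm ν := by
  rw [tvNorm_add_eq_iff, tvNorm_sub_eq_iff]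
  constructor
  · rintro ⟨E, hE, hμE, hνE⟩
    refine ⟨exists_common_isHahnSet_of_totalVariation_eq_zero hE hμE hνE, ?_⟩
    obtain ⟨B, hB, hμB, hνB⟩ :=
      exists_common_isHahnSet_of_totalVariation_eq_zero (ν := -ν) hE hμE
        (by rwa [totalVariation_neg])
    exact ⟨B, hB, hμB, isHahnSet_neg_iff.1 hνB⟩
  · rintro ⟨⟨B, hB, hμB, hνB⟩, ⟨C, hC, hμC, hνC⟩⟩
    refine ⟨B ∆ C, hB.symmDiff hC, hμB.isHahnSet_iff.1 hμC, ?_⟩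
    have hcompl : (B ∆ C)ᶜ = B ∆ Cᶜ := by
      ext x
      simp only [Set.mem_compl_iff, Set.mem_symmDiff]
      tauto
    rw [hcompl]
    exact hνB.isHahnSet_iff.1 hνC

/-- For regular Borel measures `μ`, `ν` on a locally compact Hausdorff space,
`μ ⟂ ν` iff `‖μ + ν‖ = ‖μ − ν‖ = ‖μ‖ + ‖ν‖` in the total variation norm. -/
theorem mutuallySingular_iff_norm_add_eq_and_norm_sub_eq
    {X : Type*} [TopologicalSpace X] [T2Space X] [LocallyCompactSpace X]
    [MeasurableSpace X] [BorelSpace X]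
    (μ ν : SignedMeasure X) (hμ : μ.totalVariation.Regular) (hν : ν.totalVariation.Regular) :
    (∃ E : Set X, MeasurableSet E ∧ μ.totalVariation E = 0 ∧ ν.totalVariation Eᶜ = 0) ↔
      tvNorm (μ + ν) = tvNorm μ + tvNorm ν ∧ tvNorm (μ - ν) = tvNorm μ + tvNorm ν :=
  mutuallySingular_iff_norm_add_eq_and_norm_sub_eq_general μ ν
end

section
/- Let G be a locally compact Hausdorff group and let z ∈ G^* be right cancellable in G^{luc}, i.e., for all m, n ∈ G^{luc}, mz = nz implies m = n. Then z is right cancellable in LUC(G)^*: for all m, n ∈ LUC(G)^*, m·z = n·z implies m = n. Moreover, the unital *-subalgebra {z f : f ∈ LUC(G)}, where (z f)(x) = ⟨z, l_x f⟩, is norm-dense in LUC(G). -/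
/-!
`LUC(G)` is a commutative `C⋆`-algebra, and for `z ∈ G^{luc}` the map `f ↦ z f` is a unital
`⋆`-endomorphism of it. Composing a character `m ∈ G^{luc}` with this map gives the character
`m · z`, so right cancellability of `z` in `G^{luc}` says exactly that these composites separate
the Gelfand spectrum, and Stone–Weierstrass makes `{z f}` dense. Two functionals `m, n` with
`m · z = n · z` agree on this dense set, hence are equal.
-/

open scoped BoundedContinuousFunction
open Filter Topology

set_option synthInstance.maxHeartbeats 1000000
set_option maxHeartbeats 1000000

namespace LucPaper

variable {G : Type*} [Group G] [TopologicalSpace G] [IsTopologicalGroup G]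

/-- Left translation of a bounded continuous function: `lTrans g f x = f (g * x)`. -/
noncomputable def lTrans (g : G) (f : G →ᵇ ℂ) : G →ᵇ ℂ :=
  f.compContinuous ⟨fun x => g * x, continuous_const.mul continuous_id⟩

@[simp] lemma lTrans_apply (g : G) (f : G →ᵇ ℂ) (x : G) : lTrans g f x = f (g * x) := rfl

lemma lTrans_mul (g : G) (f h : G →ᵇ ℂ) : lTrans g (f * h) = lTrans g f * lTrans g h := by
  ext x; simp [lTrans]

lemma lTrans_add (g : G) (f h : G →ᵇ ℂ) : lTrans g (f + h) = lTrans g f + lTrans g h := by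
  ext x; simp [lTrans]

lemma lTrans_smul (g : G) (c : ℂ) (f : G →ᵇ ℂ) : lTrans g (c • f) = c • lTrans g f := by
  ext x; simp [lTrans]

lemma lTrans_sub (g : G) (f h : G →ᵇ ℂ) : lTrans g (f - h) = lTrans g f - lTrans g h := by
  ext x; simp [lTrans]

lemma lTrans_lTrans (x g : G) (f : G →ᵇ ℂ) : lTrans x (lTrans g f) = lTrans (g * x) f := by
  ext y; simp [mul_assoc]

lemma norm_lTrans_le (g : G) (f : G →ᵇ ℂ) : ‖lTrans g f‖ ≤ ‖f‖ :=
  f.norm_compContinuous_le _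

lemma lTrans_algebraMap (g : G) (c : ℂ) :
    lTrans g (algebraMap ℂ (G →ᵇ ℂ) c) = algebraMap ℂ (G →ᵇ ℂ) c := by
  ext x; simp [lTrans]

lemma algebraMap_mem_luc (c : ℂ) :
    Continuous fun g : G => lTrans g (algebraMap ℂ (G →ᵇ ℂ) c) := by
  have e : (fun g : G => lTrans g (algebraMap ℂ (G →ᵇ ℂ) c)) =
      fun _ : G => algebraMap ℂ (G →ᵇ ℂ) c :=
    funext fun g => lTrans_algebraMap g c
  rw [e]
  exact continuous_const

/-- The `C*`-algebra `LUC(G)` of bounded left uniformly continuous complex functions on `G`,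
realized as a subalgebra of the bounded continuous functions. -/
noncomputable def LUC (G : Type*) [Group G] [TopologicalSpace G] [IsTopologicalGroup G] :
    Subalgebra ℂ (G →ᵇ ℂ) where
  carrier := {f | Continuous fun g : G => lTrans g f}
  mul_mem' {f h} hf hh := by
    have hf' : Continuous fun g : G => lTrans g f := hf
    have hh' : Continuous fun g : G => lTrans g h := hh
    have e : (fun g : G => lTrans g (f * h)) = fun g => lTrans g f * lTrans g h :=
      funext fun g => lTrans_mul g f h
    show Continuous fun g : G => lTrans g (f * h)
    rw [e]
    exact hf'.mul hh'
  add_mem' {f h} hf hh := by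
    have hf' : Continuous fun g : G => lTrans g f := hf
    have hh' : Continuous fun g : G => lTrans g h := hh
    have e : (fun g : G => lTrans g (f + h)) = fun g => lTrans g f + lTrans g h :=
      funext fun g => lTrans_add g f h
    show Continuous fun g : G => lTrans g (f + h)
    rw [e]
    exact hf'.add hh'
  algebraMap_mem' c := algebraMap_mem_luc c


section Instances
set_option synthInstance.maxHeartbeats 1000000 in
noncomputable instance instLUCNormedAddCommGroup (G : Type*) [Group G] [TopologicalSpace G]
    [IsTopologicalGroup G] : NormedAddCommGroup (LUC G) := inferInstance

set_option synthInstance.maxHeartbeats 1000000 in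
noncomputable instance instLUCNormedSpace (G : Type*) [Group G] [TopologicalSpace G]
    [IsTopologicalGroup G] : NormedSpace ℂ (LUC G) := inferInstance

set_option synthInstance.maxHeartbeats 1000000 in
noncomputable instance instLUCNormedRing (G : Type*) [Group G] [TopologicalSpace G]
    [IsTopologicalGroup G] : NormedRing (LUC G) := inferInstance
end Instances

/-- `LUC(G)^*`, the dual Banach space of `LUC(G)`. -/
noncomputable abbrev Ld (G : Type*) [Group G] [TopologicalSpace G] [IsTopologicalGroup G] :=
  StrongDual ℂ (LUC G)

/-- Left translation as a map `LUC G → LUC G`. -/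
noncomputable def lTransL (g : G) (f : LUC G) : LUC G :=
  ⟨lTrans g (f : G →ᵇ ℂ), by
    have hf : Continuous fun h : G => lTrans h (f : G →ᵇ ℂ) := f.2
    have e : (fun h : G => lTrans h (lTrans g (f : G →ᵇ ℂ))) =
        (fun k : G => lTrans k (f : G →ᵇ ℂ)) ∘ fun h : G => g * h := by
      funext h
      exact lTrans_lTrans h g (f : G →ᵇ ℂ)
    show Continuous fun h : G => lTrans h (lTrans g (f : G →ᵇ ℂ))
    rw [e]
    exact hf.comp (continuous_const.mul continuous_id)⟩

@[simp] lemma lTransL_coe (g : G) (f : LUC G) :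
    (lTransL g f : G →ᵇ ℂ) = lTrans g (f : G →ᵇ ℂ) := rfl

lemma continuous_lTransL (f : LUC G) : Continuous fun g : G => lTransL g f :=
  Continuous.subtype_mk f.2 _

lemma norm_lTransL_le (g : G) (f : LUC G) : ‖lTransL g f‖ ≤ ‖f‖ :=
  norm_lTrans_le g (f : G →ᵇ ℂ)

lemma lTransL_add (g : G) (f h : LUC G) : lTransL g (f + h) = lTransL g f + lTransL g h :=
  Subtype.ext (lTrans_add g _ _)

lemma lTransL_smul (g : G) (c : ℂ) (f : LUC G) : lTransL g (c • f) = c • lTransL g f :=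
  Subtype.ext (lTrans_smul g c _)

lemma lTransL_sub (g : G) (f h : LUC G) : lTransL g (f - h) = lTransL g f - lTransL g h :=
  Subtype.ext (lTrans_sub g _ _)

lemma lTransL_mul (g : G) (f h : LUC G) : lTransL g (f * h) = lTransL g f * lTransL g h :=
  Subtype.ext (lTrans_mul g _ _)

lemma lTransL_lTransL (x g : G) (f : LUC G) : lTransL x (lTransL g f) = lTransL (g * x) f :=
  Subtype.ext (lTrans_lTrans x g _)

end LucPaper

namespace LucPaper
variable {G : Type*} [Group G] [TopologicalSpace G] [IsTopologicalGroup G]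

/-- The function `n f : g ↦ ⟨n, l_g f⟩` as a bounded continuous function. -/
noncomputable def arensBCF (n : Ld G) (f : LUC G) : G →ᵇ ℂ :=
  BoundedContinuousFunction.ofNormedAddCommGroup (fun g : G => n (lTransL g f))
    (n.continuous.comp (continuous_lTransL f)) (‖n‖ * ‖f‖)
    (fun g => le_trans (n.le_opNorm _)
      (mul_le_mul_of_nonneg_left (norm_lTransL_le g f) (norm_nonneg n)))

@[simp] lemma arensBCF_apply (n : Ld G) (f : LUC G) (g : G) :
    arensBCF n f g = n (lTransL g f) := rfl

lemma norm_arensBCF_le (n : Ld G) (f : LUC G) : ‖arensBCF n f‖ ≤ ‖n‖ * ‖f‖ :=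
  BoundedContinuousFunction.norm_ofNormedAddCommGroup_le _
    (mul_nonneg (norm_nonneg n) (norm_nonneg f)) _

lemma arensBCF_sub (n : Ld G) (f h : LUC G) :
    arensBCF n (f - h) = arensBCF n f - arensBCF n h := by
  ext g
  simp [lTransL_sub]

lemma arensBCF_add (n : Ld G) (f h : LUC G) :
    arensBCF n (f + h) = arensBCF n f + arensBCF n h := by
  ext g
  simp [lTransL_add]

lemma arensBCF_smul (n : Ld G) (c : ℂ) (f : LUC G) :
    arensBCF n (c • f) = c • arensBCF n f := by
  ext g
  simp [lTransL_smul]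

lemma lipschitz_arensBCF (n : Ld G) :
    LipschitzWith ‖n‖₊ fun f : LUC G => arensBCF n f := by
  apply LipschitzWith.of_dist_le_mul
  intro f h
  rw [dist_eq_norm, dist_eq_norm, ← arensBCF_sub]
  have : ‖f - h‖ = ‖(f - h : LUC G)‖ := rfl
  calc ‖arensBCF n (f - h)‖ ≤ ‖n‖ * ‖f - h‖ := norm_arensBCF_le n (f - h)
    _ = ‖n‖₊ * ‖f - h‖ := rfl

lemma lTrans_arensBCF (n : Ld G) (f : LUC G) (g : G) :
    lTrans g (arensBCF n f) = arensBCF n (lTransL g f) := by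
  ext x
  simp only [lTrans_apply, arensBCF_apply]
  rw [lTransL_lTransL]

/-- The element `n f` of `LUC(G)`. -/
noncomputable def arensFn (n : Ld G) (f : LUC G) : LUC G :=
  ⟨arensBCF n f, by
    have e : (fun g : G => lTrans g (arensBCF n f)) =
        (fun h : LUC G => arensBCF n h) ∘ fun g : G => lTransL g f :=
      funext fun g => lTrans_arensBCF n f g
    show Continuous fun g : G => lTrans g (arensBCF n f)
    rw [e]
    exact (lipschitz_arensBCF n).continuous.comp (continuous_lTransL f)⟩

@[simp] lemma arensFn_coe (n : Ld G) (f : LUC G) : (arensFn n f : G →ᵇ ℂ) = arensBCF n f := rfl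

lemma norm_arensFn_le (n : Ld G) (f : LUC G) : ‖arensFn n f‖ ≤ ‖n‖ * ‖f‖ :=
  norm_arensBCF_le n f

/-- The Arens-type product on `LUC(G)^*`: `⟨m · n, f⟩ = ⟨m, n f⟩`. -/
noncomputable def arens (m n : Ld G) : Ld G :=
  LinearMap.mkContinuous
    { toFun := fun f : LUC G => m (arensFn n f)
      map_add' := fun f h => by
        show m (arensFn n (f + h)) = m (arensFn n f) + m (arensFn n h)
        rw [show arensFn n (f + h) = arensFn n f + arensFn n h from
          Subtype.ext (arensBCF_add n f h), map_add]
      map_smul' := fun c f => by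
        show m (arensFn n (c • f)) = c • m (arensFn n f)
        rw [show arensFn n (c • f) = c • arensFn n f from
          Subtype.ext (arensBCF_smul n c f), map_smul] }
    (‖m‖ * ‖n‖)
    (fun f => by
      calc ‖m (arensFn n f)‖ ≤ ‖m‖ * ‖arensFn n f‖ := m.le_opNorm _
        _ ≤ ‖m‖ * (‖n‖ * ‖f‖) :=
            mul_le_mul_of_nonneg_left (norm_arensFn_le n f) (norm_nonneg m)
        _ = ‖m‖ * ‖n‖ * ‖f‖ := by ring)

@[simp] lemma arens_apply (m n : Ld G) (f : LUC G) : arens m n f = m (arensFn n f) := rfl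

end LucPaper
namespace LucPaper
variable {G : Type*} [Group G] [TopologicalSpace G] [IsTopologicalGroup G]

/-- Evaluation at a point of `G`, as an element of `LUC(G)^*`. -/
noncomputable def evalChar (g : G) : Ld G :=
  LinearMap.mkContinuous
    { toFun := fun f : LUC G => (f : G →ᵇ ℂ) g
      map_add' := fun f h => rfl
      map_smul' := fun c f => rfl }
    1 (fun f => by rw [one_mul]; exact (f : G →ᵇ ℂ).norm_coe_le_norm g)

@[simp] lemma evalChar_apply (g : G) (f : LUC G) : evalChar g f = (f : G →ᵇ ℂ) g := rfl

variable (G) in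
/-- The `LUC`-compactification `G^{luc}` realized as the set of nonzero multiplicative
functionals in `LUC(G)^*`. -/
def gLuc : Set (Ld G) :=
  {m | m ≠ 0 ∧ ∀ f h : LUC G, m (f * h) = m f * m h}

variable (G) in
/-- The corona `G^* = G^{luc} \ G` in `LUC(G)^*`. -/
def gStar : Set (Ld G) :=
  gLuc G \ Set.range (evalChar (G := G))

lemma evalChar_mem_gLuc (g : G) : evalChar g ∈ gLuc G := by
  constructor
  · intro h0
    have h1 : evalChar g (1 : LUC G) = 0 := by rw [h0]; rfl
    have h2 : evalChar g (1 : LUC G) = 1 := rfl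
    rw [h2] at h1
    exact one_ne_zero h1
  · intro f h
    have : ((f * h : LUC G) : G →ᵇ ℂ) = (f : G →ᵇ ℂ) * (h : G →ᵇ ℂ) := rfl
    simp [this]

end LucPaper
namespace LucPaper
variable {G : Type*} [Group G] [TopologicalSpace G] [IsTopologicalGroup G]

/-- Membership in `C_0(G)`: vanishing at infinity. -/
def IsC0 (f : G →ᵇ ℂ) : Prop := Tendsto (f : G → ℂ) (cocompact G) (𝓝 0)

variable (G) in
/-- The annihilator `C_0(G)^⊥` of `C_0(G)` in `LUC(G)^*`. -/
noncomputable def C0perp : Submodule ℂ (Ld G) where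
  carrier := {m | ∀ f : LUC G, IsC0 (f : G →ᵇ ℂ) → m f = 0}
  add_mem' {m n} hm hn := fun f hf => by
    simp [hm f hf, hn f hf]
  zero_mem' := fun f _ => rfl
  smul_mem' c m hm := fun f hf => by
    simp [hm f hf]

lemma isC0_lTrans {f : G →ᵇ ℂ} (hf : IsC0 f) (g : G) : IsC0 (lTrans g f) := by
  have h1 : Tendsto (⇑(Homeomorph.mulLeft g)) (cocompact G) (cocompact G) :=
    tendsto_map.mono_right (le_of_eq ((Homeomorph.mulLeft g).map_cocompact))
  have h1' : Tendsto (fun x : G => g * x) (cocompact G) (cocompact G) := h1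
  exact hf.comp h1'

lemma isC0_rTransBCF {f : G →ᵇ ℂ} (hf : IsC0 f) (x : G) :
    IsC0 (f.compContinuous ⟨fun g : G => g * x, continuous_id.mul continuous_const⟩) := by
  have h1 : Tendsto (⇑(Homeomorph.mulRight x)) (cocompact G) (cocompact G) :=
    tendsto_map.mono_right (le_of_eq ((Homeomorph.mulRight x).map_cocompact))
  have h1' : Tendsto (fun g : G => g * x) (cocompact G) (cocompact G) := h1
  exact hf.comp h1'

/-- `C_0(G)^⊥` is a left ideal for the Arens product: if `n ∈ C_0(G)^⊥` then `m · n ∈ C_0(G)^⊥`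
for every `m`. -/
lemma arens_mem_C0perp_left (m : Ld G) {n : Ld G} (hn : n ∈ C0perp G) :
    arens m n ∈ C0perp G := by
  intro f hf
  have hz : arensFn n f = 0 := by
    apply Subtype.ext
    ext g
    exact hn (lTransL g f) (isC0_lTrans hf g)
  rw [arens_apply, hz, map_zero]

/-- Multiplying an element of `C_0(G)^⊥` by a point evaluation on the right stays in
`C_0(G)^⊥`. -/
lemma arens_evalChar_mem_C0perp {m : Ld G} (hm : m ∈ C0perp G) (x : G) :
    arens m (evalChar x) ∈ C0perp G := by
  intro f hf
  rw [arens_apply]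
  apply hm
  show IsC0 (arensBCF (evalChar x) f)
  have e : (arensBCF (evalChar x) f : G → ℂ) =
      ((f : G →ᵇ ℂ).compContinuous ⟨fun g : G => g * x, continuous_id.mul continuous_const⟩ :
        G → ℂ) := by
    funext g
    rfl
  show Tendsto (arensBCF (evalChar x) f : G → ℂ) (cocompact G) (𝓝 0)
  rw [e]
  exact isC0_rTransBCF hf x

/-- The multiplication on `C_0(G)^⊥` induced by the Arens product. -/
noncomputable instance : Mul (C0perp G) :=
  ⟨fun m n => ⟨arens m.1 n.1, arens_mem_C0perp_left m.1 n.2⟩⟩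

@[simp] lemma C0perp_mul_coe (m n : C0perp G) : ((m * n : C0perp G) : Ld G) = arens m.1 n.1 := rfl

end LucPaper
namespace LucPaper
variable {G : Type*} [Group G] [TopologicalSpace G] [IsTopologicalGroup G]

section WeakStar

variable {H : Type*} [Group H] [TopologicalSpace H] [IsTopologicalGroup H]

/-- Weak-star continuity for a map `C_0(G)^⊥ → C_0(H)^⊥`, phrased via filters:
whenever a filter converges pointwise (weak-star) to `m`, the images converge pointwise
(weak-star) to the image of `m`. -/
def WStarContinuousC0 (T : C0perp G → C0perp H) : Prop :=
  ∀ (l : Filter (C0perp G)) (m : C0perp G),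
    (∀ f : LUC G, Tendsto (fun n : C0perp G => (n : Ld G) f) l (𝓝 ((m : Ld G) f))) →
    ∀ f : LUC H, Tendsto (fun n : C0perp G => (T n : Ld H) f) l (𝓝 ((T m : Ld H) f))

/-- Weak-star continuity for a map `LUC(G)^* → LUC(H)^*`, phrased via filters. -/
def WStarContinuousD (T : Ld G → Ld H) : Prop :=
  ∀ (l : Filter (Ld G)) (m : Ld G),
    (∀ f : LUC G, Tendsto (fun n : Ld G => n f) l (𝓝 (m f))) →
    ∀ f : LUC H, Tendsto (fun n : Ld G => T n f) l (𝓝 (T m f))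

end WeakStar

section WeakDualSide

/-- `LUC(G)^*` equipped with its weak-star topology. -/
noncomputable abbrev LdW (G : Type*) [Group G] [TopologicalSpace G] [IsTopologicalGroup G] :=
  WeakDual ℂ (LUC G)

variable (G) in
/-- The `LUC`-compactification `G^{luc}` as a subset of the weak-star dual. -/
def gLucW : Set (LdW G) :=
  {m | m ≠ 0 ∧ ∀ f h : LUC G, m (f * h) = m f * m h}

/-- Evaluation at a point of `G` as an element of the weak-star dual. -/
noncomputable def evalCharW (g : G) : LdW G :=
  StrongDual.toWeakDual (evalChar g)

variable (G) in
/-- The corona `G^* = G^{luc} \ G` inside the weak-star dual. -/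
def gStarW : Set (LdW G) :=
  gLucW G \ Set.range (evalCharW (G := G))

/-- The Arens product transported to the weak-star dual. -/
noncomputable def arensW (m n : LdW G) : LdW G :=
  StrongDual.toWeakDual
    (arens (WeakDual.toStrongDual m) (WeakDual.toStrongDual n))

lemma evalCharW_mem_gLucW (g : G) : evalCharW g ∈ gLucW G := by
  have h := evalChar_mem_gLuc (g := g)
  constructor
  · intro h0
    apply h.1
    have : WeakDual.toStrongDual (evalCharW g) = WeakDual.toStrongDual (0 : LdW G) := by
      rw [h0]
    simpa [evalCharW] using this
  · intro f k
    exact h.2 f k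

end WeakDualSide

section FSpace

/-- `X` is an F-space: every bounded continuous real function `f` factors as `f = k·|f|`
with `k` bounded continuous. -/
def IsFSpace (X : Type*) [TopologicalSpace X] : Prop :=
  ∀ f : X →ᵇ ℝ, ∃ k : X →ᵇ ℝ, ∀ x : X, f x = k x * |f x|

/-- A P-point: every `G_δ` set containing the point is a neighbourhood of the point. -/
def IsPPoint {X : Type*} [TopologicalSpace X] (p : X) : Prop :=
  ∀ s : Set X, p ∈ s → (∃ U : ℕ → Set X, (∀ n, IsOpen (U n)) ∧ s = ⋂ n, U n) → s ∈ 𝓝 p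

end FSpace

end LucPaper

section GelfandDensity

open WeakDual

-- Stone–Weierstrass, transported along the Gelfand transform of `B`.
theorem StarAlgHom.denseRange_of_characterSpace_ext {A B : Type*} [Semiring A] [StarRing A]
    [Algebra ℂ A] [CommCStarAlgebra B] (T : A →⋆ₐ[ℂ] B)
    (hT : ∀ φ ψ : characterSpace ℂ B, (∀ a, φ (T a) = ψ (T a)) → φ = ψ) : DenseRange T := by
  let Φ := gelfandStarTransform B
  have hsep : ((Φ : B →⋆ₐ[ℂ] C(characterSpace ℂ B, ℂ)).comp T).range.SeparatesPoints := by
    intro φ ψ hφψ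
    by_contra! h
    exact hφψ (hT φ ψ fun a => h _ ⟨_, ⟨a, rfl⟩, rfl⟩)
  have hdense : DenseRange (Φ ∘ T) := by
    have := ContinuousMap.starSubalgebra_topologicalClosure_eq_top_of_separatesPoints _ hsep
    rw [DenseRange, dense_iff_closure_eq]
    exact congrArg SetLike.coe this
  have hT_eq : ⇑T = Φ.symm ∘ (Φ ∘ T) := by
    funext a
    simp
  rw [hT_eq]
  exact Φ.symm.surjective.denseRange.comp hdense (StarAlgEquiv.isometry Φ.symm).continuous

end GelfandDensity

namespace LucPaper

variable {G : Type*} [Group G] [TopologicalSpace G] [IsTopologicalGroup G]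

lemma lTrans_star (g : G) (f : G →ᵇ ℂ) : lTrans g (star f) = star (lTrans g f) := by
  ext x; simp [lTrans]

lemma star_mem_LUC {f : G →ᵇ ℂ} (hf : f ∈ LUC G) : star f ∈ LUC G := by
  change Continuous fun g : G => lTrans g (star f)
  simp_rw [lTrans_star]
  exact continuous_star.comp hf

noncomputable instance : StarRing (LUC G) where
  star f := ⟨star (f : G →ᵇ ℂ), star_mem_LUC f.2⟩
  star_involutive f := Subtype.ext (star_star (f : G →ᵇ ℂ))
  star_mul f h := Subtype.ext (star_mul (f : G →ᵇ ℂ) (h : G →ᵇ ℂ))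
  star_add f h := Subtype.ext (star_add (f : G →ᵇ ℂ) (h : G →ᵇ ℂ))

instance : StarModule ℂ (LUC G) :=
  ⟨fun c f => Subtype.ext (star_smul c (f : G →ᵇ ℂ))⟩

instance : CStarRing (LUC G) where
  norm_mul_self_le f := CStarRing.norm_mul_self_le (f : G →ᵇ ℂ)

lemma isClosed_LUC : IsClosed (LUC G : Set (G →ᵇ ℂ)) := by
  refine IsSeqClosed.isClosed fun u f hu huf => ?_
  change Continuous fun g : G => lTrans g f
  have hunif : TendstoUniformly (fun n (g : G) => lTrans g (u n)) (fun g => lTrans g f) atTop := by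
    rw [Metric.tendstoUniformly_iff]
    intro ε hε
    filter_upwards [Metric.tendsto_nhds.mp huf ε hε] with n hn g
    calc dist (lTrans g f) (lTrans g (u n)) = ‖lTrans g (f - u n)‖ := by
          rw [dist_eq_norm, lTrans_sub]
      _ ≤ ‖f - u n‖ := norm_lTrans_le _ _
      _ < ε := by rwa [← dist_eq_norm, dist_comm]
  exact hunif.continuous (Eventually.of_forall hu).frequently

instance : CompleteSpace (LUC G) := isClosed_LUC.completeSpace_coe

noncomputable instance : CommCStarAlgebra (LUC G) where
  mul_comm f h := Subtype.ext (mul_comm (f : G →ᵇ ℂ) (h : G →ᵇ ℂ))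

lemma gLuc.map_one {m : Ld G} (hm : m ∈ gLuc G) : m 1 = 1 :=
  _root_.map_one (⟨StrongDual.toWeakDual m, hm⟩ : WeakDual.characterSpace ℂ (LUC G))

lemma gLuc.map_star {m : Ld G} (hm : m ∈ gLuc G) (f : LUC G) : m (star f) = star (m f) :=
  StarHomClass.map_star (⟨StrongDual.toWeakDual m, hm⟩ : WeakDual.characterSpace ℂ (LUC G)) f

lemma lTransL_one (g : G) : lTransL g (1 : LUC G) = 1 :=
  Subtype.ext (by ext x; simp [lTrans])

lemma lTransL_star (g : G) (f : LUC G) : lTransL g (star f) = star (lTransL g f) :=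
  Subtype.ext (lTrans_star g (f : G →ᵇ ℂ))

section ArensStarAlgHom

variable {z : Ld G}

lemma arensFn_one (hz : z ∈ gLuc G) : arensFn z 1 = 1 :=
  Subtype.ext <| by ext g; exact (congrArg z (lTransL_one g)).trans (gLuc.map_one hz)

lemma arensFn_mul (hz : z ∈ gLuc G) (f h : LUC G) :
    arensFn z (f * h) = arensFn z f * arensFn z h :=
  Subtype.ext <| by ext g; exact (congrArg z (lTransL_mul g f h)).trans (hz.2 _ _)

lemma arensFn_star (hz : z ∈ gLuc G) (f : LUC G) : arensFn z (star f) = star (arensFn z f) :=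
  Subtype.ext <| by ext g; exact (congrArg z (lTransL_star g f)).trans (gLuc.map_star hz _)

lemma arensFn_smul (c : ℂ) (f : LUC G) : arensFn z (c • f) = c • arensFn z f :=
  Subtype.ext (arensBCF_smul z c f)

noncomputable def arensStarAlgHom (hz : z ∈ gLuc G) : LUC G →⋆ₐ[ℂ] LUC G where
  toFun := arensFn z
  map_one' := arensFn_one hz
  map_mul' := arensFn_mul hz
  map_zero' := by simpa using arensFn_smul 0 (0 : LUC G)
  map_add' f h := Subtype.ext (arensBCF_add z f h)
  commutes' c := by
    rw [Algebra.algebraMap_eq_smul_one, arensFn_smul, arensFn_one hz]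
  map_star' := arensFn_star hz

theorem denseRange_arensFn (hz : z ∈ gLuc G)
    (hrc : ∀ m n : Ld G, m ∈ gLuc G → n ∈ gLuc G → arens m z = arens n z → m = n) :
    DenseRange (arensFn z) :=
  -- a character `φ` composed with `f ↦ z f` is the functional `φ · z`
  (arensStarAlgHom hz).denseRange_of_characterSpace_ext fun φ ψ h =>
    Subtype.ext <| hrc _ _ φ.2 ψ.2 <| ContinuousLinearMap.ext h

lemma arens_right_cancel_of_denseRange (hd : DenseRange (arensFn z)) {m n : Ld G}
    (h : arens m z = arens n z) : m = n :=
  DFunLike.coe_injective <|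
    hd.equalizer m.continuous n.continuous <| funext fun f => DFunLike.congr_fun h f

end ArensStarAlgHom

end LucPaper

open LucPaper Filter Topology
open scoped BoundedContinuousFunction

theorem right_cancellable_in_dual_and_dense_range_general
    {G : Type*} [Group G] [TopologicalSpace G] [IsTopologicalGroup G]
    (z : Ld G) (hz : z ∈ gStar G)
    (hrc : ∀ m n : Ld G, m ∈ gLuc G → n ∈ gLuc G → arens m z = arens n z → m = n) :
    (∀ m n : Ld G, arens m z = arens n z → m = n) ∧
      Dense (Set.range fun f : LUC G => arensFn z f) :=
  have hd := denseRange_arensFn hz.1 hrc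
  ⟨fun _ _ => arens_right_cancel_of_denseRange hd, hd⟩

/-- If `z ∈ G^*` is right cancellable in `G^{luc}`, then `z` is right
cancellable in all of `LUC(G)^*`, and the set `{z f : f ∈ LUC(G)}` (where `(z f)(x) = ⟨z, l_x f⟩`)
is norm-dense in `LUC(G)`. -/
theorem right_cancellable_in_dual_and_dense_range
    {G : Type*} [Group G] [TopologicalSpace G] [IsTopologicalGroup G]
    [T2Space G] [LocallyCompactSpace G]
    (z : Ld G) (hz : z ∈ gStar G)
    (hrc : ∀ m n : Ld G, m ∈ gLuc G → n ∈ gLuc G → arens m z = arens n z → m = n) :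
    (∀ m n : Ld G, arens m z = arens n z → m = n) ∧
      Dense (Set.range fun f : LUC G => arensFn z f) :=
  right_cancellable_in_dual_and_dense_range_general z hz hrc
end

section
/- Let G and H be locally compact Hausdorff groups and let T : C_0(G)^⊥ → C_0(H)^⊥ be an isometric algebra isomorphism (not necessarily weak-star continuous). Then for each x ∈ H, the right-point multiplier R_x : C_0(G)^⊥ → C_0(G)^⊥ defined by R_x(m) = T^{-1}(T(m)·δ_x) is weak-star continuous. -/
open scoped BoundedContinuousFunction
open Filter Topology

set_option synthInstance.maxHeartbeats 1000000
set_option maxHeartbeats 1000000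

/-! Multiplicativity of `T` and associativity of the Arens product give
`R_x(n) · P = n · T⁻¹(δ_x · T P)` for all `n, P ∈ C_0(G)^⊥`, so `⟨R_x(n), P h⟩ = ⟨n, c h⟩`
with `c = T⁻¹(δ_x · T P)` independent of `n`: a weak-star continuous function of `n`. It is
therefore enough that every `f ∈ LUC(G)` factors as `f = P h` with `P ∈ C_0(G)^⊥` and
`h ∈ LUC(G)` (for compact `G` there is nothing to prove, as `C_0(G)^⊥ = 0`).

For noncompact `G`, let `κ` be the least cardinality of a cover of `G` by translates of a
compact neighbourhood `V` of `1`; fewer than `κ` compact sets never cover `G`. A transfinite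
recursion over the `κ` finite unions `K_i` of those translates then picks points `b_i → ∞` whose
blocks `V V K_i b_i` are pairwise disjoint. Gluing the right translates by `b_i` of cut-offs of
`f` to `K_i` gives `h ∈ LUC(G)` with `h (g b_i) = f g` on `K_i`, and a weak-star cluster point
`P` of the `δ_{b_i}` lies in `C_0(G)^⊥` and satisfies `P h = f`. -/

lemma TendstoUniformly.mul_of_norm_le {ι α R : Type*} [NormedRing R] {p : Filter ι}
    {F G : ι → α → R} {f g : α → R} (hF : TendstoUniformly F f p) (hG : TendstoUniformly G g p)
    (hF1 : ∀ n x, ‖F n x‖ ≤ 1) {M : ℝ} (hg : ∀ x, ‖g x‖ ≤ M) :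
    TendstoUniformly (fun n x => F n x * G n x) (fun x => f x * g x) p := by
  rw [Metric.tendstoUniformly_iff] at hF hG ⊢
  intro ε hε
  have hδ : 0 < ε / (2 * (|M| + 1)) := by positivity
  filter_upwards [hF _ hδ, hG _ (half_pos hε)] with n hFn hGn x
  have hfF : ‖f x - F n x‖ * |M| ≤ ε / 2 := calc
    _ ≤ ε / (2 * (|M| + 1)) * (|M| + 1) := by
      gcongr
      · exact (dist_eq_norm (f x) _).symm.trans_le (hFn x).le
      · linarith
    _ = ε / 2 := by field_simp
  calc dist (f x * g x) (F n x * G n x)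
      = ‖(f x - F n x) * g x + F n x * (g x - G n x)‖ := by rw [dist_eq_norm]; noncomm_ring
    _ ≤ ‖f x - F n x‖ * |M| + 1 * ‖g x - G n x‖ :=
      (norm_add_le _ _).trans (add_le_add (norm_mul_le_of_le le_rfl ((hg x).trans (le_abs_self M)))
        (norm_mul_le_of_le (hF1 n x) le_rfl))
    _ < ε := by
      rw [one_mul, ← dist_eq_norm (g x)]
      linarith [hGn x]

lemma HasCompactSupport.tendstoUniformly_mul_left {β : Type*} [UniformSpace β] [Zero β]
    {G : Type*} [Group G] [TopologicalSpace G] [IsTopologicalGroup G] {ψ : G → β}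
    (hψ : Continuous ψ) (hs : HasCompactSupport ψ) :
    TendstoUniformly (fun s x => ψ (s * x)) ψ (𝓝 1) := by
  -- in the right uniformity, `(x, s * x)` is close to the diagonal iff `s` is close to `1`
  let := IsTopologicalGroup.rightUniformSpace G
  rw [tendstoUniformly_iff_tendsto]
  refine Tendsto.comp (f := fun q : G × G => (q.2, q.1 * q.2))
    (hs.uniformContinuous_of_continuous hψ) ?_
  rw [uniformity_eq_comap_nhds_one' G, tendsto_comap_iff]
  simpa [Function.comp_def] using tendsto_fst.mono_left (le_refl (𝓝 (1 : G) ×ˢ ⊤))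

namespace LucPaper

open Set Function
open scoped Pointwise

section ArensProduct

variable {G : Type*} [Group G] [TopologicalSpace G] [IsTopologicalGroup G]

lemma lTransL_arensFn (n : Ld G) (f : LUC G) (g : G) :
    lTransL g (arensFn n f) = arensFn n (lTransL g f) :=
  Subtype.ext (lTrans_arensBCF n f g)

lemma arensFn_arens (m n : Ld G) (f : LUC G) :
    arensFn (arens m n) f = arensFn m (arensFn n f) := by
  ext g
  change m (arensFn n (lTransL g f)) = m (lTransL g (arensFn n f))
  rw [lTransL_arensFn]

lemma arens_assoc (l m n : Ld G) : arens (arens l m) n = arens l (arens m n) := by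
  ext f
  change l (arensFn m (arensFn n f)) = l (arensFn (arens m n) f)
  rw [arensFn_arens]

instance [CompactSpace G] : Subsingleton (C0perp G) where
  allEq m n := by
    have hC0 (v : LUC G) : IsC0 (v : G →ᵇ ℂ) := by
      rw [IsC0, cocompact_eq_bot]
      exact tendsto_bot
    ext v
    rw [m.2 v (hC0 v), n.2 v (hC0 v)]

section RightPointMultiplier

variable {H : Type*} [Group H] [TopologicalSpace H] [IsTopologicalGroup H]
  (T : C0perp G ≃ₗ[ℂ] C0perp H)

lemma symm_arens_evalChar_mul (hmul : ∀ m n : C0perp G, T (m * n) = T m * T n) (x : H)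
    (n P : C0perp G) :
    T.symm ⟨arens (T n).1 (evalChar x), arens_evalChar_mem_C0perp (T n).2 x⟩ * P =
      n * T.symm ⟨arens (evalChar x) (T P).1, arens_mem_C0perp_left _ (T P).2⟩ := by
  apply T.injective
  rw [hmul, hmul, LinearEquiv.apply_symm_apply, LinearEquiv.apply_symm_apply]
  exact Subtype.ext (arens_assoc _ _ _)

lemma symm_arens_evalChar_apply_arensFn (hmul : ∀ m n : C0perp G, T (m * n) = T m * T n)
    (x : H) (n P : C0perp G) (h : LUC G) :
    (T.symm ⟨arens (T n).1 (evalChar x), arens_evalChar_mem_C0perp (T n).2 x⟩ : Ld G)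
        (arensFn P h) =
      (n : Ld G) (arensFn (T.symm ⟨arens (evalChar x) (T P).1,
        arens_mem_C0perp_left _ (T P).2⟩ : Ld G) h) := by
  rw [← arens_apply, ← arens_apply, ← C0perp_mul_coe, ← C0perp_mul_coe,
    symm_arens_evalChar_mul T hmul]

end RightPointMultiplier

end ArensProduct

section SupTranslate

variable {G : Type*} [Group G] {ψ : G → ℝ} {K : Set G}

/-- A cut-off to `K` whose left modulus of continuity is that of `ψ`, whatever `K` is. -/
noncomputable def supTranslate (ψ : G → ℝ) (K : Set G) (g : G) : ℝ :=
  sSup ((fun k => ψ (g * k⁻¹)) '' K)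

lemma bddAbove_supTranslate_image (hψ : ∀ x, ψ x ∈ Icc (0 : ℝ) 1) (g : G) :
    BddAbove ((fun k => ψ (g * k⁻¹)) '' K) :=
  ⟨1, by rintro _ ⟨k, -, rfl⟩; exact (hψ _).2⟩

lemma supTranslate_mem_Icc (hψ : ∀ x, ψ x ∈ Icc (0 : ℝ) 1) (g : G) :
    supTranslate ψ K g ∈ Icc (0 : ℝ) 1 :=
  ⟨Real.sSup_nonneg (by rintro _ ⟨k, -, rfl⟩; exact (hψ _).1),
    Real.sSup_le (by rintro _ ⟨k, -, rfl⟩; exact (hψ _).2) zero_le_one⟩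

lemma supTranslate_eq_one (hψ : ∀ x, ψ x ∈ Icc (0 : ℝ) 1) (hψ1 : ψ 1 = 1) {g : G} (hg : g ∈ K) :
    supTranslate ψ K g = 1 :=
  le_antisymm (supTranslate_mem_Icc hψ g).2
    (le_csSup (bddAbove_supTranslate_image hψ g) ⟨g, hg, by simp [hψ1]⟩)

lemma mem_mul_of_supTranslate_ne_zero (hψ : ∀ x, ψ x ∈ Icc (0 : ℝ) 1) {V : Set G}
    (hψV : ∀ x ∉ V, ψ x = 0) {g : G} (hg : supTranslate ψ K g ≠ 0) : g ∈ V * K := by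
  contrapose! hg
  refine le_antisymm (Real.sSup_le ?_ le_rfl) (supTranslate_mem_Icc hψ g).1
  rintro _ ⟨k, hk, rfl⟩
  refine (hψV _ fun hgk => hg ?_).le
  simpa using mul_mem_mul hgk hk

lemma dist_supTranslate_mul_le (hψ : ∀ x, ψ x ∈ Icc (0 : ℝ) 1) {s : G} {ε : ℝ}
    (hs : ∀ x, dist (ψ (s * x)) (ψ x) ≤ ε) (g : G) :
    dist (supTranslate ψ K (s * g)) (supTranslate ψ K g) ≤ ε := by
  have hε : 0 ≤ ε := dist_nonneg.trans (hs 1)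
  have key (g₁ g₂ : G) (h : ∀ k, ψ (g₁ * k) ≤ ψ (g₂ * k) + ε) :
      supTranslate ψ K g₁ ≤ supTranslate ψ K g₂ + ε := by
    refine Real.sSup_le ?_ (add_nonneg (supTranslate_mem_Icc hψ g₂).1 hε)
    rintro _ ⟨k, hk, rfl⟩
    exact (h _).trans (add_le_add_left
      (le_csSup (bddAbove_supTranslate_image hψ g₂) ⟨k, hk, rfl⟩) ε)
  have hs' (k : G) : |ψ (s * g * k) - ψ (g * k)| ≤ ε := by
    simpa [Real.dist_eq, mul_assoc] using hs (g * k)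
  rw [Real.dist_eq, abs_sub_le_iff, sub_le_iff_le_add', sub_le_iff_le_add']
  exact ⟨key _ _ fun k => by linarith [(abs_sub_le_iff.1 (hs' k)).1],
    key _ _ fun k => by linarith [(abs_sub_le_iff.1 (hs' k)).2]⟩

lemma tendstoUniformly_supTranslate (hψ : ∀ x, ψ x ∈ Icc (0 : ℝ) 1) {l : Filter G}
    (hψu : TendstoUniformly (fun s x => ψ (s * x)) ψ l) {ι : Type*} (K : ι → Set G) :
    TendstoUniformly (fun s (p : ι × G) => supTranslate ψ (K p.1) (s * p.2))
      (fun p => supTranslate ψ (K p.1) p.2) l := by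
  rw [Metric.tendstoUniformly_iff] at hψu ⊢
  intro ε hε
  filter_upwards [hψu _ (half_pos hε)] with s hs p
  rw [dist_comm]
  refine (dist_supTranslate_mul_le hψ (fun x => ?_) _).trans_lt (half_lt_self hε)
  rw [dist_comm]
  exact (hs x).le

end SupTranslate

section SumTranslates

variable {G : Type*} [Group G] {ι M : Type*} [AddCommMonoid M]

lemma mem_mul_singleton_iff {S : Set G} {b y : G} : y ∈ S * {b} ↔ y * b⁻¹ ∈ S := by
  rw [mul_singleton, image_mul_right, mem_preimage]

lemma mul_mem_mul_mul_singleton {V A : Set G} {s x b : G} (hs : s ∈ V) (hx : x * b⁻¹ ∈ A) :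
    s * x ∈ V * A * {b} :=
  mem_mul_singleton_iff.2 (by simpa [mul_assoc] using mul_mem_mul hs hx)

/-- When the blocks `A i * {b i}` are disjoint and `F i` vanishes off `A i`, at most one term of
this sum is nonzero. -/
noncomputable def sumTranslates (F : ι → G → M) (b : ι → G) (y : G) : M :=
  ∑ᶠ i, F i (y * (b i)⁻¹)

variable {F : ι → G → M} {b : ι → G} {V : Set G} {A : ι → Set G}

lemma sumTranslates_eq_of_mem (hV : 1 ∈ V)
    (hdisj : Pairwise (Disjoint on fun i => V * A i * {b i}))
    (hsupp : ∀ i y, F i y ≠ 0 → y ∈ A i) {i : ι} {y : G} (hy : y ∈ V * A i * {b i}) :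
    sumTranslates F b y = F i (y * (b i)⁻¹) := by
  refine finsum_eq_single _ i fun j hji => ?_
  by_contra hne
  have hyj : y ∈ V * A j * {b j} := by
    simpa using mul_mem_mul_mul_singleton hV (hsupp j _ hne)
  exact disjoint_left.1 (hdisj hji) hyj hy

lemma sumTranslates_eq_zero (hsupp : ∀ i y, F i y ≠ 0 → y ∈ A i) {y : G}
    (hy : ∀ i, y * (b i)⁻¹ ∉ A i) : sumTranslates F b y = 0 :=
  finsum_eq_zero_of_forall_eq_zero fun i => by_contra fun hne => hy i (hsupp i _ hne)

lemma sumTranslates_mul_eq_or (hV : 1 ∈ V)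
    (hdisj : Pairwise (Disjoint on fun i => V * A i * {b i}))
    (hsupp : ∀ i y, F i y ≠ 0 → y ∈ A i) {s : G} (hs : s ∈ V) (y : G) :
    sumTranslates F b (s * y) = sumTranslates F b y ∨
      ∃ i z, sumTranslates F b (s * y) = F i (s * z) ∧ sumTranslates F b y = F i z := by
  have eq_of_mem {i : ι} {x : G} := sumTranslates_eq_of_mem hV hdisj hsupp (i := i) (y := x)
  by_cases hy : ∃ i, y * (b i)⁻¹ ∈ A i
  · obtain ⟨i, hi⟩ := hy
    refine .inr ⟨i, y * (b i)⁻¹, ?_, eq_of_mem (by simpa using mul_mem_mul_mul_singleton hV hi)⟩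
    rw [eq_of_mem (mul_mem_mul_mul_singleton hs hi), mul_assoc]
  rw [not_exists] at hy
  by_cases hsy : ∃ i, s * y * (b i)⁻¹ ∈ A i
  · obtain ⟨i, hi⟩ := hsy
    refine .inr ⟨i, y * (b i)⁻¹, ?_, ?_⟩
    · rw [eq_of_mem (by simpa using mul_mem_mul_mul_singleton hV hi), mul_assoc]
    · rw [sumTranslates_eq_zero hsupp hy]
      exact (by_contra fun hne => hy i (hsupp i _ (Ne.symm hne)))
  rw [not_exists] at hsy
  exact .inl (by rw [sumTranslates_eq_zero hsupp hsy, sumTranslates_eq_zero hsupp hy])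

end SumTranslates

section Blocks

open Cardinal

universe u

variable {G : Type u} [Group G]

lemma exists_smul_cover_minimal (O : Set G) (hO : (1 : G) ∈ O) :
    ∃ A : Set G, (∀ g, ∃ a ∈ A, g ∈ a • O) ∧
      ∀ A' : Set G, (∀ g, ∃ a ∈ A', g ∈ a • O) → #A ≤ #A' := by
  let covers : Set (Set G) := {A | ∀ g, ∃ a ∈ A, g ∈ a • O}
  have hne : covers.Nonempty :=
    ⟨univ, fun g => ⟨g, trivial, by simpa using smul_mem_smul_set (a := g) hO⟩⟩
  exact ⟨_, argminOn_mem (fun A : Set G => #A) covers hne,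
    fun A' hA' => argminOn_le (fun A : Set G => #A) covers hA'⟩

variable [TopologicalSpace G] [IsTopologicalGroup G]

lemma infinite_of_forall_mem_smul [NoncompactSpace G] {V : Set G} (hV : IsCompact V)
    {A : Set G} (hA : ∀ g, ∃ a ∈ A, g ∈ a • V) : A.Infinite := fun hfin =>
  noncompact_univ G <| (hfin.isCompact_biUnion fun a _ => hV.smul a).of_isClosed_subset
    isClosed_univ fun g _ => by
      obtain ⟨a, ha, hga⟩ := hA g
      exact mem_biUnion ha hga

lemma exists_forall_notMem_of_mk_lt {O : Set G} (hO : IsOpen O) (hO1 : (1 : G) ∈ O)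
    {A : Set G} (hA : A.Infinite) (hAmin : ∀ A' : Set G, (∀ g, ∃ a ∈ A', g ∈ a • O) → #A ≤ #A')
    {𝒞 : Set (Set G)} (h𝒞 : #𝒞 < #A) (hc : ∀ c ∈ 𝒞, IsCompact c) : ∃ g, ∀ c ∈ 𝒞, g ∉ c := by
  by_contra! hcov
  -- covering each `c ∈ 𝒞` by finitely many translates of `O` would give a cover of `G` by
  -- fewer than `#A` translates
  have hfin (c : 𝒞) : ∃ t : Finset G, (c : Set G) ⊆ ⋃ a ∈ t, a • O :=
    (hc c c.2).elim_finite_subcover (fun a : G => a • O) (fun a => hO.smul a)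
      fun g _ => mem_iUnion.2 ⟨g, by simpa using smul_mem_smul_set (a := g) hO1⟩
  choose t ht using hfin
  have hA' : ∀ g, ∃ a ∈ ⋃ c, (t c : Set G), g ∈ a • O := fun g => by
    obtain ⟨c, hc𝒞, hgc⟩ := hcov g
    obtain ⟨a, hat, hga⟩ := mem_iUnion₂.1 (ht ⟨c, hc𝒞⟩ hgc)
    exact ⟨a, mem_iUnion.2 ⟨⟨c, hc𝒞⟩, hat⟩, hga⟩
  refine (hAmin _ hA').not_gt ?_
  rcases lt_or_ge #𝒞 ℵ₀ with h𝒞fin | h𝒞inf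
  · have : Finite 𝒞 := lt_aleph0_iff_finite.1 h𝒞fin
    exact ((finite_iUnion fun c => (t c).finite_toSet).lt_aleph0).trans_le
      (infinite_iff.1 hA.to_subtype)
  · calc #(⋃ c, (t c : Set G)) ≤ #𝒞 * ⨆ c, #(t c : Set G) := mk_iUnion_le _
      _ ≤ #𝒞 * ℵ₀ := by
        gcongr
        exact ciSup_le' fun c => (t c).finite_toSet.lt_aleph0.le
      _ = #𝒞 := mul_aleph0_eq h𝒞inf
      _ < #A := h𝒞

lemma exists_pairwise_disjoint_mul_singleton {ι : Type u} (hι : ℵ₀ ≤ #ι)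
    (havoid : ∀ 𝒞 : Set (Set G), #𝒞 < #ι → (∀ c ∈ 𝒞, IsCompact c) → ∃ g, ∀ c ∈ 𝒞, g ∉ c)
    {K : ι → Set G} (hK : ∀ i, IsCompact (K i)) {C : Set G} (hC : IsCompact C) :
    ∃ b : ι → G, (∀ i, b i ∉ K i) ∧ Pairwise (Disjoint on fun i => C * K i * {b i}) := by
  -- recursion along a well-order of type `(#ι).ord`, whose initial segments have size `< #ι`
  obtain ⟨r, hr, hrι⟩ := exists_ord_eq ι
  let forbidden (i : ι) (prev : ∀ j, r j i → G) : Set (Set G) :=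
    insert (K i) (range fun j : {j // r j i} => (C * K i)⁻¹ * (C * K j * {prev j j.2}))
  have hstep (i : ι) (prev : ∀ j, r j i → G) : ∃ g, ∀ c ∈ forbidden i prev, g ∉ c := by
    refine havoid _ ?_ ?_
    · calc #(forbidden i prev) ≤ #{j // r j i} + 1 :=
            mk_insert_le.trans (by gcongr; exact mk_range_le)
        _ < #ι := add_lt_of_lt hι (card_typein_lt i hrι) (one_lt_aleph0.trans_le hι)
    · rintro _ (rfl | ⟨j, rfl⟩)
      exacts [hK i, (hC.mul (hK i)).inv.mul ((hC.mul (hK j)).mul isCompact_singleton)]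
  choose step hstep using hstep
  let b : ι → G := hr.wf.fix step
  have hb (i : ι) : b i = step i fun j _ => b j := hr.wf.fix_eq step i
  have hdisj {i j : ι} (hji : r j i) : Disjoint (C * K i * {b i}) (C * K j * {b j}) := by
    refine disjoint_left.2 fun z hzi hzj => hstep i (fun j _ => b j) _
      (mem_insert_of_mem _ ⟨⟨j, hji⟩, rfl⟩) ?_
    rw [← hb i]
    simpa using mul_mem_mul (inv_mem_inv.2 (mem_mul_singleton_iff.1 hzi)) hzj
  refine ⟨b, fun i => ?_, fun i j hij => ?_⟩
  · rw [hb i]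
    exact hstep i _ _ (mem_insert _ _)
  · rcases trichotomous_of r i j with h | h | h
    exacts [(hdisj h).symm, (hij h).elim, hdisj h]

theorem exists_exhaustion_pairwise_disjoint_mul_singleton [LocallyCompactSpace G]
    [NoncompactSpace G] {C : Set G} (hC : IsCompact C) :
    ∃ (ι : Type u) (L : Filter ι) (K : ι → Set G) (b : ι → G), L.NeBot ∧
      (∀ g, ∀ᶠ i in L, g ∈ K i) ∧ Tendsto b L (cocompact G) ∧
      Pairwise (Disjoint on fun i => C * K i * {b i}) := by
  obtain ⟨V, hVc, hV⟩ := exists_compact_mem_nhds (1 : G)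
  have hO1 : (1 : G) ∈ interior V := mem_interior_iff_mem_nhds.2 hV
  obtain ⟨A, hAcov, hAmin⟩ := exists_smul_cover_minimal (interior V) hO1
  have hA : A.Infinite := infinite_of_forall_mem_smul hVc fun g =>
    (hAcov g).imp fun _ ha => ⟨ha.1, smul_set_mono interior_subset ha.2⟩
  have : Infinite A := hA.to_subtype
  have hcard : #(Finset A) = #A := mk_finset_of_infinite A
  let K (s : Finset A) : Set G := ⋃ a ∈ s, (a : G) • V
  obtain ⟨b, hbK, hdisj⟩ := exists_pairwise_disjoint_mul_singleton (hcard ▸ infinite_iff.1 this)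
    (fun 𝒞 h𝒞 hc => exists_forall_notMem_of_mk_lt isOpen_interior hO1 hA hAmin (hcard ▸ h𝒞) hc)
    (fun s => s.finite_toSet.isCompact_biUnion fun a _ => hVc.smul (a : G)) hC
  refine ⟨Finset A, atTop, K, b, atTop_neBot, fun g => ?_, ?_, hdisj⟩
  · obtain ⟨a, ha, hga⟩ := hAcov g
    filter_upwards [eventually_ge_atTop {⟨a, ha⟩}] with s hs
    exact mem_biUnion (hs (Finset.mem_singleton_self _)) (smul_set_mono interior_subset hga)
  · refine hasBasis_cocompact.tendsto_right_iff.2 fun K' hK' => ?_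
    obtain ⟨t, ht⟩ := hK'.elim_finite_subcover (fun a : A => (a : G) • interior V)
      (fun a => isOpen_interior.smul _) fun g _ => mem_iUnion.2 <| by
        obtain ⟨a, ha, hga⟩ := hAcov g
        exact ⟨⟨a, ha⟩, hga⟩
    filter_upwards [eventually_ge_atTop t] with s hs hbs
    obtain ⟨a, hat, hba⟩ := mem_iUnion₂.1 (ht hbs)
    exact hbK s (mem_biUnion (hs hat) (smul_set_mono interior_subset hba))

end Blocks

section Factorization

open BoundedContinuousFunction

variable {G : Type*} [Group G] [TopologicalSpace G] [IsTopologicalGroup G]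

lemma tendstoUniformly_mul_left_of_mem_LUC (f : LUC G) :
    TendstoUniformly (fun s y => (f : G →ᵇ ℂ) (s * y)) (f : G →ᵇ ℂ) (𝓝 1) := by
  have h := (continuous_lTransL f).tendsto 1
  rw [tendsto_subtype_rng, tendsto_iff_tendstoUniformly] at h
  convert h using 1 <;> ext y <;> simp

lemma exists_LUC_of_tendstoUniformly {h : G → ℂ} {C : ℝ} (hC : ∀ y, ‖h y‖ ≤ C)
    (hu : TendstoUniformly (fun s y => h (s * y)) h (𝓝 1)) :
    ∃ hL : LUC G, ⇑(hL : G →ᵇ ℂ) = h := by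
  have translate {g₀ : G} : Tendsto (· * g₀⁻¹) (𝓝 g₀) (𝓝 (1 : G)) := by
    simpa using (continuous_mul_const g₀⁻¹).tendsto g₀
  have hcont : Continuous h := continuous_iff_continuousAt.2 fun y₀ => by
    simpa [ContinuousAt, comp_def] using (hu.tendsto_at y₀).comp (translate (g₀ := y₀))
  let hB := ofNormedAddCommGroup h hcont C hC
  refine ⟨⟨hB, continuous_iff_continuousAt.2 fun g₀ => ?_⟩, rfl⟩
  rw [ContinuousAt, tendsto_iff_tendstoUniformly]
  intro u hu'
  filter_upwards [translate.eventually ((hu.comp (g₀ * ·)) u hu')] with g hg x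
  simpa [hB, mul_assoc] using hg x

lemma exists_LUC_apply_mul_eq_family {ι : Type*} {F : ι → G → ℂ} {b : ι → G} {V : Set G}
    {A : ι → Set G} (hV : V ∈ 𝓝 1) (hdisj : Pairwise (Disjoint on fun i => V * A i * {b i}))
    (hsupp : ∀ i y, F i y ≠ 0 → y ∈ A i) {C : ℝ} (hC : ∀ i y, ‖F i y‖ ≤ C)
    (hu : TendstoUniformly (fun s (p : ι × G) => F p.1 (s * p.2)) (fun p => F p.1 p.2) (𝓝 1)) :
    ∃ h : LUC G, ∀ i, ∀ y ∈ A i, (h : G →ᵇ ℂ) (y * b i) = F i y := by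
  have hV1 : (1 : G) ∈ V := mem_of_mem_nhds hV
  have hmem {i : ι} {y : G} (hy : y * (b i)⁻¹ ∈ A i) : y ∈ V * A i * {b i} := by
    simpa using mul_mem_mul_mul_singleton hV1 hy
  have hbdd (y : G) : ‖sumTranslates F b y‖ ≤ max C 0 := by
    by_cases hy : ∃ i, y * (b i)⁻¹ ∈ A i
    · obtain ⟨i, hi⟩ := hy
      rw [sumTranslates_eq_of_mem hV1 hdisj hsupp (hmem hi)]
      exact (hC i _).trans (le_max_left _ _)
    · rw [not_exists] at hy
      rw [sumTranslates_eq_zero hsupp hy, norm_zero]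
      exact le_max_right _ _
  have hunif :
      TendstoUniformly (fun s y => sumTranslates F b (s * y)) (sumTranslates F b) (𝓝 1) := by
    rw [Metric.tendstoUniformly_iff] at hu ⊢
    intro ε hε
    filter_upwards [hu ε hε, hV] with s hs hsV y
    rcases sumTranslates_mul_eq_or hV1 hdisj hsupp hsV y with h | ⟨i, z, h₁, h₂⟩
    · rwa [h, dist_self]
    · rw [h₁, h₂]
      exact hs (i, z)
  obtain ⟨h, hh⟩ := exists_LUC_of_tendstoUniformly hbdd hunif
  refine ⟨h, fun i y hy => ?_⟩
  rw [hh, sumTranslates_eq_of_mem hV1 hdisj hsupp (i := i) (hmem (by simpa using hy)),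
    mul_inv_cancel_right]

lemma exists_LUC_apply_mul_eq [LocallyCompactSpace G] (f : LUC G) {V : Set G} (hV : V ∈ 𝓝 1)
    {ι : Type*} {K : ι → Set G} {b : ι → G}
    (hdisj : Pairwise (Disjoint on fun i => V * V * K i * {b i})) :
    ∃ h : LUC G, ∀ i, ∀ y ∈ K i, (h : G →ᵇ ℂ) (y * b i) = (f : G →ᵇ ℂ) y := by
  obtain ⟨ψ, hψ1, hψ0, hψc, hψI⟩ := exists_continuous_one_zero_of_isCompact isCompact_singleton
    isOpen_interior.isClosed_compl
    (disjoint_compl_right_iff_subset.2 (singleton_subset_iff.2 (mem_interior_iff_mem_nhds.2 hV)))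
  have hψV (x : G) (hx : x ∉ V) : ψ x = 0 := hψ0 fun hx' => hx (interior_subset hx')
  let φ (i : ι) (y : G) : ℂ := supTranslate ψ (K i) y
  have hφ1 (i : ι) (y : G) : ‖φ i y‖ ≤ 1 := by
    simpa [φ, abs_of_nonneg (supTranslate_mem_Icc hψI y).1] using (supTranslate_mem_Icc hψI y).2
  have hφu :
      TendstoUniformly (fun s (p : ι × G) => φ p.1 (s * p.2)) (fun p => φ p.1 p.2) (𝓝 1) :=
    Complex.isometry_ofReal.uniformContinuous.comp_tendstoUniformly
      (tendstoUniformly_supTranslate hψI (hψc.tendstoUniformly_mul_left ψ.continuous) K)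
  obtain ⟨h, hh⟩ := exists_LUC_apply_mul_eq_family (F := fun i y => φ i y * (f : G →ᵇ ℂ) y)
    (A := fun i => V * K i) hV (by simpa only [mul_assoc] using hdisj)
    (fun i y hne => mem_mul_of_supTranslate_ne_zero hψI hψV
      (Complex.ofReal_ne_zero.1 (left_ne_zero_of_mul hne)))
    (fun i y => (norm_mul_le_of_le (hφ1 i y) (norm_coe_le_norm _ y)).trans_eq (one_mul _))
    (hφu.mul_of_norm_le ((tendstoUniformly_mul_left_of_mem_LUC f).comp Prod.snd)
      (fun s p => hφ1 _ _) (fun p => norm_coe_le_norm _ p.2))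
  refine ⟨h, fun i y hy => ?_⟩
  rw [hh i y (subset_mul_right _ (mem_of_mem_nhds hV) hy)]
  simp [φ, supTranslate_eq_one hψI (by simpa using hψ1 rfl) hy]

lemma exists_tendsto_C0perp_of_tendsto_cocompact {ι : Type*} {L : Filter ι} [L.NeBot]
    {b : ι → G} (hb : Tendsto b L (cocompact G)) :
    ∃ P : C0perp G, ∃ U : Ultrafilter ι, ↑U ≤ L ∧
      ∀ v : LUC G, Tendsto (fun i => (v : G →ᵇ ℂ) (b i)) U (𝓝 ((P : Ld G) v)) := by
  let U := Ultrafilter.of L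
  have hball (i : ι) : evalChar (b i) ∈ Metric.closedBall (0 : Ld G) 1 := by
    rw [mem_closedBall_zero_iff]
    exact LinearMap.mkContinuous_norm_le _ zero_le_one _
  obtain ⟨p, -, hp⟩ := (WeakDual.isCompact_closedBall (0 : Ld G) 1).ultrafilter_le_nhds
    (U.map fun i => StrongDual.toWeakDual (evalChar (b i)))
    (le_principal_iff.2 (mem_map.2 (univ_mem' hball)))
  have hlim (v : LUC G) : Tendsto (fun i => (v : G →ᵇ ℂ) (b i)) U (𝓝 (p v)) :=
    ((WeakDual.eval_continuous v).tendsto p).comp hp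
  refine ⟨⟨WeakDual.toStrongDual p, fun v hv => ?_⟩, U, Ultrafilter.of_le L, hlim⟩
  exact tendsto_nhds_unique (hlim v) ((hv.comp hb).mono_left (Ultrafilter.of_le L))

theorem exists_arensFn_eq [LocallyCompactSpace G] [NoncompactSpace G] (f : LUC G) :
    ∃ P : C0perp G, ∃ h : LUC G, arensFn P h = f := by
  obtain ⟨V, hVc, hV⟩ := exists_compact_mem_nhds (1 : G)
  obtain ⟨ι, L, K, b, hL, hK, hb, hdisj⟩ :=
    exists_exhaustion_pairwise_disjoint_mul_singleton (hVc.mul hVc)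
  obtain ⟨h, hh⟩ := exists_LUC_apply_mul_eq f hV hdisj
  obtain ⟨P, U, hUL, hP⟩ := exists_tendsto_C0perp_of_tendsto_cocompact hb
  refine ⟨P, h, Subtype.ext (ext fun g => ?_)⟩
  refine tendsto_nhds_unique (hP (lTransL g h)) (tendsto_const_nhds.congr' ?_)
  filter_upwards [hUL (hK g)] with i hi
  exact (hh i g hi).symm

end Factorization

end LucPaper

open LucPaper Filter Topology
open scoped BoundedContinuousFunction

theorem right_point_multiplier_wstar_continuous_general
    {G : Type*} [Group G] [TopologicalSpace G] [IsTopologicalGroup G]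
    [LocallyCompactSpace G]
    {H : Type*} [Group H] [TopologicalSpace H] [IsTopologicalGroup H]
    (T : C0perp G ≃ₗ[ℂ] C0perp H)
    (hmul : ∀ m n : C0perp G, T (m * n) = T m * T n)
    (x : H) :
    WStarContinuousC0 (G := G) (H := G) (fun m : C0perp G =>
      T.symm ⟨arens (T m).1 (evalChar x), arens_evalChar_mem_C0perp (T m).2 x⟩) := by
  intro l m hconv f
  by_cases hG : CompactSpace G
  · exact tendsto_const_nhds.congr fun n => by rw [Subsingleton.elim n m]
  · have := not_compactSpace_iff.1 hG
    obtain ⟨P, h, rfl⟩ := exists_arensFn_eq f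
    simp only [symm_arens_evalChar_apply_arensFn T hmul x]
    exact hconv _

/-- For an isometric algebra isomorphism `T : C_0(G)^⊥ → C_0(H)^⊥` (not
necessarily weak-star continuous), each right-point multiplier `R_x(m) = T⁻¹(T(m)·δ_x)` is
weak-star continuous. -/
theorem right_point_multiplier_wstar_continuous
    {G : Type*} [Group G] [TopologicalSpace G] [IsTopologicalGroup G]
    [T2Space G] [LocallyCompactSpace G]
    {H : Type*} [Group H] [TopologicalSpace H] [IsTopologicalGroup H]
    [T2Space H] [LocallyCompactSpace H]
    (T : C0perp G ≃ₗ[ℂ] C0perp H)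
    (hmul : ∀ m n : C0perp G, T (m * n) = T m * T n)
    (hiso : ∀ m : C0perp G, ‖T m‖ = ‖m‖) (x : H) :
    WStarContinuousC0 (G := G) (H := G) (fun m : C0perp G =>
      T.symm ⟨arens (T m).1 (evalChar x), arens_evalChar_mem_C0perp (T m).2 x⟩) :=
  right_point_multiplier_wstar_continuous_general T hmul x
end
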